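/- (Redundancy characterization of a single asset, equations (2.2)–(2.4) of the paper.) For each i ∈ {1,…,d}, the subset {1,…,d}∖{i} spans the mean-variance frontier (i.e., asset i is redundant) if and only if α_i = 0 and 1_{d−1}^⊤β_i = 1; equivalently, i ∈ S* if and only if α_i² + (1_{d−1}^⊤β_i − 1)² > 0. -/

import Mathlib

open Matrix

/-- `v_S(p)`: the infimum of portfolio variance over fully invested portfolios
supported on `S` with target mean `p`, valued in `EReal` (so `inf ∅ = +∞`). -/
noncomputable def vS {d : ℕ} (A : Matrix (Fin d) (Fin d) ℝ) (μ : Fin d → ℝ)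
    (S : Set (Fin d)) (p : ℝ) : EReal :=
  sInf {q : EReal | ∃ x : Fin d → ℝ,
    ((fun _ => (1 : ℝ)) ⬝ᵥ x = 1) ∧ (μ ⬝ᵥ x = p) ∧
    (∀ i, i ∉ S → x i = 0) ∧ q = ((x ⬝ᵥ (A *ᵥ x) : ℝ) : EReal)}

/-- `S` spans the mean-variance frontier of the full asset set. -/
def SpansFrontier {d : ℕ} (A : Matrix (Fin d) (Fin d) ℝ) (μ : Fin d → ℝ)
    (S : Set (Fin d)) : Prop :=
  ∀ p : ℝ, vS A μ S p = vS A μ Set.univ p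

/-- `Σ₋ᵢ`: the submatrix of `A` deleting row and column `i`. -/
noncomputable def subMat {d : ℕ} (A : Matrix (Fin d) (Fin d) ℝ) (i : Fin d) :
    Matrix {j : Fin d // j ≠ i} {j : Fin d // j ≠ i} ℝ :=
  A.submatrix Subtype.val Subtype.val

/-- `Γ₋ᵢ,ᵢ`: the `i`-th column of `A` with its `i`-th entry removed. -/
noncomputable def gammaCol {d : ℕ} (A : Matrix (Fin d) (Fin d) ℝ) (i : Fin d) :
    {j : Fin d // j ≠ i} → ℝ :=
  fun j => A j.val i

/-- Population regression slope `βᵢ := Σ₋ᵢ⁻¹ Γ₋ᵢ,ᵢ`. -/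
noncomputable def betaCoef {d : ℕ} (A : Matrix (Fin d) (Fin d) ℝ) (i : Fin d) :
    {j : Fin d // j ≠ i} → ℝ :=
  (subMat A i)⁻¹ *ᵥ gammaCol A i

/-- Population regression intercept `αᵢ := μᵢ − βᵢᵀ μ₋ᵢ`. -/
noncomputable def alphaCoef {d : ℕ} (A : Matrix (Fin d) (Fin d) ℝ) (μ : Fin d → ℝ)
    (i : Fin d) : ℝ :=
  μ i - ∑ j : {j : Fin d // j ≠ i}, betaCoef A i j * μ j.val

/-!
Regressing asset `i` on the others gives the hedge portfolio `r = eᵢ - βᵢ`, and the normal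
equations `Σ₋ᵢ βᵢ = Γ₋ᵢ,ᵢ` say exactly that `Σ r = s eᵢ`, where `s > 0` is the residual variance.
Hence `s (Σ⁻¹ b)ᵢ = rᵀ b`, so `(Σ⁻¹ μ)ᵢ = αᵢ / s` and `(Σ⁻¹ 1)ᵢ = (1 - 1ᵀβᵢ) / s`.
If `αᵢ = 0` and `1ᵀβᵢ = 1`, replacing a portfolio `x` by `x - xᵢ r` keeps its budget and mean,
drops asset `i` and lowers the variance by `s xᵢ²`. Otherwise `i ∈ S*`, so some frontier portfolio
`x*` holds asset `i`; any portfolio `y` with the same budget and mean has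
`yᵀΣy = x*ᵀΣx* + (y - x*)ᵀΣ(y - x*) ≥ x*ᵀΣx* + s (yᵢ - x*ᵢ)²`, which for `yᵢ = 0` is strictly
more than the frontier variance.
-/

lemma Matrix.PosDef.isSymm {ι : Type*} {A : Matrix ι ι ℝ} (hA : A.PosDef) : A.IsSymm :=
  isHermitian_iff_isSymm.mp hA.isHermitian

section FrontierPortfolio

variable {ι : Type*} [Fintype ι]

/-- By the Lagrange conditions, these are the minimum-variance portfolios for their mean. -/
def IsFrontierPortfolio (A : Matrix ι ι ℝ) (μ x : ι → ℝ) : Prop :=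
  (fun _ => (1 : ℝ)) ⬝ᵥ x = 1 ∧ ∃ l t : ℝ, A *ᵥ x = l • (fun _ => (1 : ℝ)) + t • μ

namespace Matrix

variable {R : Type*} [CommRing R] {A : Matrix ι ι R}

lemma IsSymm.dotProduct_mulVec_comm (hA : A.IsSymm) (x y : ι → R) :
    x ⬝ᵥ (A *ᵥ y) = y ⬝ᵥ (A *ᵥ x) := by
  simpa [hA.eq] using dotProduct_transpose_mulVec A x y

lemma IsSymm.quadForm_add (hA : A.IsSymm) (x y : ι → R) :
    (x + y) ⬝ᵥ (A *ᵥ (x + y)) = x ⬝ᵥ (A *ᵥ x) + 2 * (x ⬝ᵥ (A *ᵥ y)) + y ⬝ᵥ (A *ᵥ y) := by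
  simp only [mulVec_add, dotProduct_add, add_dotProduct, hA.dotProduct_mulVec_comm y x]
  ring

lemma mulVec_nonsing_inv_mulVec [DecidableEq ι] (hA : IsUnit A) (v : ι → R) :
    A *ᵥ (A⁻¹ *ᵥ v) = v := by
  rw [mulVec_mulVec, mul_nonsing_inv _ ((isUnit_iff_isUnit_det A).mp hA), one_mulVec]

end Matrix

lemma Matrix.PosDef.exists_isFrontierPortfolio_apply_ne_zero [DecidableEq ι]
    {A : Matrix ι ι ℝ} (hA : A.PosDef) (μ : ι → ℝ) (i : ι)
    (hi : (A⁻¹ *ᵥ μ) i ≠ 0 ∨ (A⁻¹ *ᵥ fun _ => (1 : ℝ)) i ≠ 0) :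
    ∃ x, IsFrontierPortfolio A μ x ∧ x i ≠ 0 := by
  set u := A⁻¹ *ᵥ fun _ => (1 : ℝ)
  set w := A⁻¹ *ᵥ μ
  have ha : 0 < (fun _ => (1 : ℝ)) ⬝ᵥ u := by
    simpa using hA.inv.dotProduct_mulVec_pos (x := fun _ => (1 : ℝ))
      (Function.ne_iff.mpr ⟨i, one_ne_zero⟩)
  by_cases hu : u i = 0
  · -- adding multiples of `u` fixes the budget without moving coordinate `i`
    set c := (1 - (fun _ => (1 : ℝ)) ⬝ᵥ w) / (fun _ => (1 : ℝ)) ⬝ᵥ u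
    refine ⟨w + c • u, ⟨?_, c, 1, ?_⟩, ?_⟩
    · rw [dotProduct_add, dotProduct_smul, smul_eq_mul, div_mul_cancel₀ _ ha.ne']
      ring
    · rw [mulVec_add, mulVec_smul, mulVec_nonsing_inv_mulVec hA.isUnit,
        mulVec_nonsing_inv_mulVec hA.isUnit, one_smul, add_comm]
    · simpa [hu] using hi.resolve_right (not_not.mpr hu)
  · refine ⟨((fun _ => (1 : ℝ)) ⬝ᵥ u)⁻¹ • u, ⟨?_, ((fun _ => (1 : ℝ)) ⬝ᵥ u)⁻¹, 0, ?_⟩, ?_⟩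
    · rw [dotProduct_smul, smul_eq_mul, inv_mul_cancel₀ ha.ne']
    · rw [mulVec_smul, mulVec_nonsing_inv_mulVec hA.isUnit, zero_smul, add_zero]
    · exact mul_ne_zero (inv_ne_zero ha.ne') hu

lemma IsFrontierPortfolio.quadForm_add_quadForm_sub {A : Matrix ι ι ℝ} (hA : A.IsSymm)
    {μ x : ι → ℝ} (hx : IsFrontierPortfolio A μ x) {y : ι → ℝ} (hy1 : (fun _ => (1 : ℝ)) ⬝ᵥ y = 1)
    (hyμ : μ ⬝ᵥ y = μ ⬝ᵥ x) :
    x ⬝ᵥ (A *ᵥ x) + (y - x) ⬝ᵥ (A *ᵥ (y - x)) = y ⬝ᵥ (A *ᵥ y) := by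
  obtain ⟨hx1, l, t, hAx⟩ := hx
  have hcross : x ⬝ᵥ (A *ᵥ (y - x)) = 0 := by
    rw [hA.dotProduct_mulVec_comm, hAx, dotProduct_comm]
    simp only [dotProduct_sub, add_dotProduct, smul_dotProduct, hy1, hx1, hyμ]
    ring
  simpa [hcross] using (hA.quadForm_add x (y - x)).symm

end FrontierPortfolio

section HedgePortfolio

variable {d : ℕ} (A : Matrix (Fin d) (Fin d) ℝ) (i : Fin d)

noncomputable def hedgePortfolio : Fin d → ℝ :=
  fun j => if h : j = i then 1 else -betaCoef A i ⟨j, h⟩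

/-- The Schur complement `Σᵢᵢ - Γ₋ᵢ,ᵢᵀ βᵢ` of `Σ₋ᵢ`. -/
noncomputable def residualVariance : ℝ :=
  (A *ᵥ hedgePortfolio A i) i

@[simp]
lemma hedgePortfolio_self : hedgePortfolio A i i = 1 := by
  simp [hedgePortfolio]

@[simp]
lemma hedgePortfolio_coe (j : {j : Fin d // j ≠ i}) : hedgePortfolio A i j = -betaCoef A i j :=
  dif_neg j.prop

lemma hedgePortfolio_dotProduct (b : Fin d → ℝ) :
    hedgePortfolio A i ⬝ᵥ b = b i - ∑ j : {j : Fin d // j ≠ i}, betaCoef A i j * b j := by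
  rw [dotProduct, Fintype.sum_eq_add_sum_subtype_ne _ i, hedgePortfolio_self, one_mul,
    sub_eq_add_neg, ← Finset.sum_neg_distrib]
  simp only [hedgePortfolio_coe, neg_mul]

variable {A}

lemma mulVec_hedgePortfolio (hA : A.PosDef) :
    A *ᵥ hedgePortfolio A i = Pi.single i (residualVariance A i) := by
  funext j
  rcases eq_or_ne j i with rfl | hj
  · simp [residualVariance]
  · have hβ : subMat A i *ᵥ betaCoef A i = gammaCol A i :=
      mulVec_nonsing_inv_mulVec (hA.submatrix Subtype.val_injective).isUnit _
    have := congrFun hβ ⟨j, hj⟩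
    simp only [subMat, gammaCol, mulVec, dotProduct, submatrix_apply] at this
    rw [Pi.single_eq_of_ne hj, mulVec, dotProduct, Fintype.sum_eq_add_sum_subtype_ne _ i]
    simp only [hedgePortfolio_self, hedgePortfolio_coe, mul_neg,
      Finset.sum_neg_distrib, this]
    ring

lemma dotProduct_mulVec_hedgePortfolio (hA : A.PosDef) (x : Fin d → ℝ) :
    x ⬝ᵥ (A *ᵥ hedgePortfolio A i) = residualVariance A i * x i := by
  rw [mulVec_hedgePortfolio i hA, dotProduct_single, mul_comm]

lemma residualVariance_pos (hA : A.PosDef) : 0 < residualVariance A i := by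
  have h := hA.dotProduct_mulVec_pos (x := hedgePortfolio A i)
    (Function.ne_iff.mpr ⟨i, by simp⟩)
  simpa [dotProduct_mulVec_hedgePortfolio i hA] using h

lemma residualVariance_mul_inv_mulVec_apply (hA : A.PosDef) (b : Fin d → ℝ) :
    residualVariance A i * (A⁻¹ *ᵥ b) i = hedgePortfolio A i ⬝ᵥ b := by
  rw [← dotProduct_mulVec_hedgePortfolio i hA, hA.isSymm.dotProduct_mulVec_comm,
    mulVec_nonsing_inv_mulVec hA.isUnit]

lemma quadForm_sub_smul_hedgePortfolio (hA : A.PosDef) (x : Fin d → ℝ) :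
    (x - x i • hedgePortfolio A i) ⬝ᵥ (A *ᵥ (x - x i • hedgePortfolio A i))
      = x ⬝ᵥ (A *ᵥ x) - residualVariance A i * x i ^ 2 := by
  rw [sub_eq_add_neg, hA.isSymm.quadForm_add, ← neg_smul, mulVec_smul, dotProduct_smul,
    smul_dotProduct, dotProduct_smul, dotProduct_mulVec_hedgePortfolio i hA,
    dotProduct_mulVec_hedgePortfolio i hA, hedgePortfolio_self]
  simp only [smul_eq_mul]
  ring

lemma residualVariance_mul_sq_le (hA : A.PosDef) (x : Fin d → ℝ) :
    residualVariance A i * x i ^ 2 ≤ x ⬝ᵥ (A *ᵥ x) := by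
  have := hA.posSemidef.dotProduct_mulVec_nonneg (x - x i • hedgePortfolio A i)
  rw [star_trivial, quadForm_sub_smul_hedgePortfolio i hA] at this
  linarith

end HedgePortfolio

section Frontier

variable {d : ℕ} {A : Matrix (Fin d) (Fin d) ℝ} {μ : Fin d → ℝ}

lemma vS_le_quadForm {S : Set (Fin d)} {x : Fin d → ℝ} (hx1 : (fun _ => (1 : ℝ)) ⬝ᵥ x = 1)
    (hxS : ∀ j, j ∉ S → x j = 0) : vS A μ S (μ ⬝ᵥ x) ≤ ((x ⬝ᵥ (A *ᵥ x) : ℝ) : EReal) :=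
  sInf_le ⟨x, hx1, rfl, hxS, rfl⟩

lemma vS_anti {S T : Set (Fin d)} (hST : S ⊆ T) (p : ℝ) : vS A μ T p ≤ vS A μ S p :=
  sInf_le_sInf fun _ ⟨x, hx1, hxμ, hxS, hq⟩ => ⟨x, hx1, hxμ, fun j hj => hxS j (hj ∘ (hST ·)), hq⟩

lemma spansFrontier_compl_singleton_of_alphaCoef_eq_zero (hA : A.PosDef) {i : Fin d}
    (hα : alphaCoef A μ i = 0) (hβ : ∑ j : {j : Fin d // j ≠ i}, betaCoef A i j = 1) :
    SpansFrontier A μ (Set.univ \ {i}) := by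
  refine fun p => le_antisymm (le_sInf ?_) (vS_anti Set.sdiff_subset p)
  rintro _ ⟨x, hx1, rfl, -, rfl⟩
  set y := x - x i • hedgePortfolio A i
  have hy1 : (fun _ => (1 : ℝ)) ⬝ᵥ y = 1 := by
    simp [y, dotProduct_sub, dotProduct_comm _ (hedgePortfolio A i), hedgePortfolio_dotProduct,
      hβ, hx1]
  have hyμ : μ ⬝ᵥ y = μ ⬝ᵥ x := by
    rw [dotProduct_sub, dotProduct_smul, dotProduct_comm _ (hedgePortfolio A i),
      hedgePortfolio_dotProduct, ← alphaCoef, hα, smul_zero, sub_zero]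
  have hyS : ∀ j, j ∉ Set.univ \ {i} → y j = 0 := by
    simp [y]
  calc vS A μ (Set.univ \ {i}) (μ ⬝ᵥ x)
      ≤ ((y ⬝ᵥ (A *ᵥ y) : ℝ) : EReal) := hyμ ▸ vS_le_quadForm hy1 hyS
    _ ≤ ((x ⬝ᵥ (A *ᵥ x) : ℝ) : EReal) := by
      rw [EReal.coe_le_coe_iff, quadForm_sub_smul_hedgePortfolio i hA]
      nlinarith [residualVariance_pos i hA, sq_nonneg (x i)]

lemma not_spansFrontier_compl_singleton_of_isFrontierPortfolio (hA : A.PosDef) {i : Fin d}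
    {x : Fin d → ℝ} (hx : IsFrontierPortfolio A μ x) (hxi : x i ≠ 0) :
    ¬ SpansFrontier A μ (Set.univ \ {i}) := by
  intro hspan
  have hlow : ((x ⬝ᵥ (A *ᵥ x) + residualVariance A i * x i ^ 2 : ℝ) : EReal)
      ≤ vS A μ (Set.univ \ {i}) (μ ⬝ᵥ x) := by
    refine le_sInf ?_
    rintro _ ⟨y, hy1, hyμ, hyS, rfl⟩
    have hyi : y i = 0 := hyS i (by simp)
    rw [EReal.coe_le_coe_iff, ← hx.quadForm_add_quadForm_sub hA.isSymm hy1 hyμ]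
    simpa [hyi] using residualVariance_mul_sq_le i hA (y - x)
  have := (hlow.trans_eq (hspan _)).trans (vS_le_quadForm hx.1 (by simp))
  rw [EReal.coe_le_coe_iff] at this
  nlinarith [residualVariance_pos i hA, sq_pos_of_ne_zero hxi]

end Frontier

lemma sq_add_sq_pos_iff {R : Type*} [Ring R] [LinearOrder R] [IsStrictOrderedRing R] {a b : R} :
    0 < a ^ 2 + b ^ 2 ↔ a ≠ 0 ∨ b ≠ 0 := by
  rw [(add_nonneg (sq_nonneg a) (sq_nonneg b)).lt_iff_ne', Ne,
    add_eq_zero_iff_of_nonneg (sq_nonneg a) (sq_nonneg b), sq_eq_zero_iff, sq_eq_zero_iff,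
    not_and_or]

section Redundancy

variable {d : ℕ} {A : Matrix (Fin d) (Fin d) ℝ} (μ : Fin d → ℝ) (i : Fin d)

lemma inv_mulVec_apply_eq_zero_iff_alphaCoef (hA : A.PosDef) :
    (A⁻¹ *ᵥ μ) i = 0 ↔ alphaCoef A μ i = 0 := by
  rw [alphaCoef, ← hedgePortfolio_dotProduct, ← residualVariance_mul_inv_mulVec_apply i hA,
    mul_eq_zero, or_iff_right (residualVariance_pos i hA).ne']

lemma inv_mulVec_one_apply_eq_zero_iff (hA : A.PosDef) :
    (A⁻¹ *ᵥ fun _ => (1 : ℝ)) i = 0 ↔ ∑ j : {j : Fin d // j ≠ i}, betaCoef A i j = 1 := by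
  rw [← mul_right_inj' (residualVariance_pos i hA).ne', residualVariance_mul_inv_mulVec_apply i hA,
    hedgePortfolio_dotProduct, mul_zero]
  simp only [mul_one]
  exact sub_eq_zero.trans eq_comm

lemma spansFrontier_compl_singleton_iff (hA : A.PosDef) :
    SpansFrontier A μ (Set.univ \ {i}) ↔
      alphaCoef A μ i = 0 ∧ ∑ j : {j : Fin d // j ≠ i}, betaCoef A i j = 1 := by
  refine ⟨fun hspan => ?_, fun h => spansFrontier_compl_singleton_of_alphaCoef_eq_zero hA h.1 h.2⟩
  rw [← inv_mulVec_apply_eq_zero_iff_alphaCoef μ i hA, ← inv_mulVec_one_apply_eq_zero_iff i hA]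
  by_contra h
  obtain ⟨x, hx, hxi⟩ := hA.exists_isFrontierPortfolio_apply_ne_zero μ i (not_and_or.mp h)
  exact not_spansFrontier_compl_singleton_of_isFrontierPortfolio hA hx hxi hspan

end Redundancy

theorem single_asset_redundancy_general
    {d : ℕ} (A : Matrix (Fin d) (Fin d) ℝ) (hA : A.PosDef)
    (μ : Fin d → ℝ) :
    ∀ i : Fin d,
      (SpansFrontier A μ (Set.univ \ {i}) ↔
        (alphaCoef A μ i = 0 ∧ ∑ j : {j : Fin d // j ≠ i}, betaCoef A i j = 1)) ∧
      (i ∈ {k : Fin d | (A⁻¹ *ᵥ μ) k ≠ 0 ∨ (A⁻¹ *ᵥ fun _ => (1 : ℝ)) k ≠ 0} ↔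
        0 < alphaCoef A μ i ^ 2
          + (∑ j : {j : Fin d // j ≠ i}, betaCoef A i j - 1) ^ 2) := by
  intro i
  refine ⟨spansFrontier_compl_singleton_iff μ i hA, ?_⟩
  refine (or_congr (inv_mulVec_apply_eq_zero_iff_alphaCoef μ i hA).not
    (inv_mulVec_one_apply_eq_zero_iff i hA).not).trans ?_
  rw [sq_add_sq_pos_iff, sub_ne_zero]

/-- redundancy characterization of a single asset, equations
(2.2)–(2.4) of the paper: asset `i` is redundant iff `αᵢ = 0` and `1ᵀβᵢ = 1`;
equivalently `i ∈ S*` iff `αᵢ² + (1ᵀβᵢ − 1)² > 0`. -/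
theorem single_asset_redundancy
    {d : ℕ} (hd : 2 ≤ d) (A : Matrix (Fin d) (Fin d) ℝ) (hA : A.PosDef)
    (μ : Fin d → ℝ) :
    ∀ i : Fin d,
      (SpansFrontier A μ (Set.univ \ {i}) ↔
        (alphaCoef A μ i = 0 ∧ ∑ j : {j : Fin d // j ≠ i}, betaCoef A i j = 1)) ∧
      (i ∈ {k : Fin d | (A⁻¹ *ᵥ μ) k ≠ 0 ∨ (A⁻¹ *ᵥ fun _ => (1 : ℝ)) k ≠ 0} ↔
        0 < alphaCoef A μ i ^ 2
          + (∑ j : {j : Fin d // j ≠ i}, betaCoef A i j - 1) ^ 2) :=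
  single_asset_redundancy_general A hA μ
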